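/- Let Λ_smooth ⊆ Λ ⊆ ℝ^J with μ_J(Λ \ Λ_smooth) = 0 (Lebesgue measure in ℝ^J). Define Λ_ext = {(λ¹, λ²) ∈ Λ × Λ : μ₁(L(λ¹, λ²) ∩ (Λ \ Λ_smooth)) > 0}, where L(λ¹, λ²) is the line segment joining λ¹ and λ² and μ₁ is one-dimensional Hausdorff (Lebesgue) measure along the segment. Then μ_{2J}(Λ_ext) = 0. -/

import Mathlib

/-!
Enlarge the null set `N` to a measurable one. For each fixed `α ≠ 1` the map
`(x, y) ↦ α • x + (1 - α) • y` is, in `y`, an invertible affine map, so it pulls `N` back to a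
null set of pairs. By Fubini (exchanging the order of the two almost-everywhere quantifiers),
for almost every pair the set of parameters `α` whose point on the line lies in `N` is null.
-/

open MeasureTheory

section SegmentSlices

variable {E : Type*} [NormedAddCommGroup E] [NormedSpace ℝ E] [FiniteDimensional ℝ E]
  [MeasurableSpace E] [BorelSpace E] (μ : Measure E) [μ.IsAddHaarMeasure] {N : Set E}

theorem ae_smul_add_notMem {c : ℝ} (hc : c ≠ 0) (b : E) (hN : μ N = 0) :
    ∀ᵐ y ∂μ, c • y + b ∉ N := by
  have hpre : {y | ¬ c • y + b ∉ N} = (c • ·) ⁻¹' ((· + b) ⁻¹' N) := by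
    ext y; simp
  rw [ae_iff, hpre, Measure.addHaar_preimage_smul μ hc, measure_preimage_add_right, hN,
    mul_zero]

theorem ae_prod_smul_add_smul_notMem (hNm : MeasurableSet N) (hN : μ N = 0) (a : ℝ) {c : ℝ}
    (hc : c ≠ 0) : ∀ᵐ q ∂μ.prod μ, a • q.1 + c • q.2 ∉ N := by
  refine (Measure.ae_prod_iff_ae_ae ?_).2 (ae_of_all _ fun x => ?_)
  · exact (by fun_prop : Continuous fun q : E × E => a • q.1 + c • q.2).measurable hNm.compl
  · simpa only [add_comm] using ae_smul_add_notMem μ hc (a • x) hN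

theorem ae_prod_ae_smul_add_one_sub_smul_notMem (hN : μ N = 0) :
    ∀ᵐ q ∂μ.prod μ, ∀ᵐ α : ℝ, α • q.1 + (1 - α) • q.2 ∉ N := by
  obtain ⟨M, hNM, hMm, hM⟩ := exists_measurable_superset_of_null hN
  have hmeas : MeasurableSet {p : (E × E) × ℝ | p.2 • p.1.1 + (1 - p.2) • p.1.2 ∉ M} :=
    (by fun_prop : Continuous fun p : (E × E) × ℝ => p.2 • p.1.1 + (1 - p.2) • p.1.2).measurable
      hMm.compl
  have hM_ae : ∀ᵐ q ∂μ.prod μ, ∀ᵐ α : ℝ, α • q.1 + (1 - α) • q.2 ∉ M := by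
    refine (Measure.ae_ae_comm hmeas).2 ?_
    filter_upwards [volume.ae_ne 1] with α hα
    exact ae_prod_smul_add_smul_notMem μ hMm hM α (sub_ne_zero.2 hα.symm)
  filter_upwards [hM_ae] with q hq
  filter_upwards [hq] with α hα
  exact fun h => hα (hNM h)

end SegmentSlices

theorem segment_exceptional_pairs_null_general (J : ℕ)
    (Λ Λsmooth : Set (Fin J → ℝ))
    (hnull : volume (Λ \ Λsmooth) = 0) :
    volume {q : (Fin J → ℝ) × (Fin J → ℝ) |
        q.1 ∈ Λ ∧ q.2 ∈ Λ ∧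
        0 < volume {α : ℝ | α ∈ Set.Icc (0 : ℝ) 1 ∧
          (α • q.1 + (1 - α) • q.2) ∈ Λ \ Λsmooth}} = 0 := by
  have hae := ae_prod_ae_smul_add_one_sub_smul_notMem volume hnull
  rw [← Measure.volume_eq_prod, ae_iff] at hae
  refine measure_mono_null ?_ hae
  intro q hq hq_ae
  exact hq.2.2.ne' (measure_mono_null (fun α hα => not_not_intro hα.2) (ae_iff.1 hq_ae))

/-- If `Λ_smooth ⊆ Λ ⊆ ℝ^J` and the exceptional set `Λ \ Λ_smooth` has `J`-dimensional
Lebesgue measure zero, then the set `Λ_ext` of pairs `(λ¹, λ²) ∈ Λ × Λ` whose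
connecting segment `L(λ¹, λ²) = {αλ¹ + (1−α)λ² : α ∈ [0,1]}` meets `Λ \ Λ_smooth` in
a set of positive one-dimensional measure is a null set in `ℝ^{2J}`. -/
theorem segment_exceptional_pairs_null (J : ℕ)
    (Λ Λsmooth : Set (Fin J → ℝ)) (hsub : Λsmooth ⊆ Λ)
    (hnull : volume (Λ \ Λsmooth) = 0) :
    volume {q : (Fin J → ℝ) × (Fin J → ℝ) |
        q.1 ∈ Λ ∧ q.2 ∈ Λ ∧
        0 < volume {α : ℝ | α ∈ Set.Icc (0 : ℝ) 1 ∧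
          (α • q.1 + (1 - α) • q.2) ∈ Λ \ Λsmooth}} = 0 :=
  segment_exceptional_pairs_null_general J Λ Λsmooth hnull
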